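/- Let P = ℤ[ω₁,…,ω₈,y₃,y₄,y₅,y₆,y₉,y₁₀,y₁₅] and let α₄, α₆, α₇, β be arbitrary elements of the ideal ⟨ω₁,…,ω₈⟩ ⊂ P. Set λ₄ = 5y₆ + α₄, λ₆ = 3y₁₀ + α₆, λ₇ = 2y₁₅ + α₇, φ = 2y₆⁵ − y₁₀³ + y₁₅² + β, and define μ₄ = −12φ + 5y₆⁴λ₄ − 4y₁₀²λ₆ + 6y₁₅λ₇, μ₆ = −10φ + 4y₆⁴λ₄ − 3y₁₀²λ₆ + 5y₁₅λ₇, μ₇ = 15φ − 6y₆⁴λ₄ + 5y₁₀²λ₆ − 7y₁₅λ₇. Then: (i) μ₄ = y₆⁵ + 5y₆⁴α₄ − 4y₁₀²α₆ + 6y₁₅α₇ − 12β, μ₆ = y₁₀³ + 4y₆⁴α₄ − 3y₁₀²α₆ + 5y₁₅α₇ − 10β, μ₇ = y₁₅² − 6y₆⁴α₄ + 5y₁₀²α₆ − 7y₁₅α₇ + 15β; (ii) φ = 2μ₄ − μ₆ + μ₇; and consequently (iii) for any ideal I of P containing λ₄, λ₆, λ₇, one has I + ⟨φ⟩ = I +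 ⟨μ₄, μ₆, μ₇⟩. -/

import Mathlib

open MvPolynomial

noncomputable section

/-- P = ℤ[ω₁,…,ω₈,y₃,y₄,y₅,y₆,y₉,y₁₀,y₁₅]: ωᵢ = X (i−1) for 1 ≤ i ≤ 8,
    y₃ = X 8, y₄ = X 9, y₅ = X 10, y₆ = X 11, y₉ = X 12, y₁₀ = X 13, y₁₅ = X 14. -/
abbrev E8P : Type := MvPolynomial (Fin 15) ℤ

/-- The ideal ⟨ω₁,…,ω₈⟩ ⊂ P. -/
def E8omegaIdeal : Ideal E8P :=
  Ideal.span (X '' {i : Fin 15 | (i : ℕ) < 8})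

def lam4 (a4 : E8P) : E8P := 5 * X 11 + a4
def lam6 (a6 : E8P) : E8P := 3 * X 13 + a6
def lam7 (a7 : E8P) : E8P := 2 * X 14 + a7
def phiE8 (b : E8P) : E8P := 2 * X 11 ^ 5 - X 13 ^ 3 + X 14 ^ 2 + b

def mu4 (a4 a6 a7 b : E8P) : E8P :=
  -12 * phiE8 b + 5 * X 11 ^ 4 * lam4 a4 - 4 * X 13 ^ 2 * lam6 a6 + 6 * X 14 * lam7 a7
def mu6 (a4 a6 a7 b : E8P) : E8P :=
  -10 * phiE8 b + 4 * X 11 ^ 4 * lam4 a4 - 3 * X 13 ^ 2 * lam6 a6 + 5 * X 14 * lam7 a7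
def mu7 (a4 a6 a7 b : E8P) : E8P :=
  15 * phiE8 b - 6 * X 11 ^ 4 * lam4 a4 + 5 * X 13 ^ 2 * lam6 a6 - 7 * X 14 * lam7 a7

/-! Each μ is a multiple of φ plus a combination of λ₄, λ₆, λ₇, and φ is a ℤ-combination of
the μ's; so modulo any ideal containing the λ's, φ and the μ's generate the same ideal. -/

theorem Ideal.sup_span_eq_sup_span {R : Type*} [CommSemiring R] {I : Ideal R} {s t : Set R}
    (hst : ∀ x ∈ s, x ∈ I ⊔ Ideal.span t) (hts : ∀ x ∈ t, x ∈ I ⊔ Ideal.span s) :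
    I ⊔ Ideal.span s = I ⊔ Ideal.span t :=
  le_antisymm (sup_le le_sup_left (Ideal.span_le.2 hst))
    (sup_le le_sup_left (Ideal.span_le.2 hts))

section

variable (a4 a6 a7 b : E8P)

theorem mu4_eq :
    mu4 a4 a6 a7 b =
      X 11 ^ 5 + 5 * X 11 ^ 4 * a4 - 4 * X 13 ^ 2 * a6 + 6 * X 14 * a7 - 12 * b := by
  simp only [mu4, phiE8, lam4, lam6, lam7]
  ring

theorem mu6_eq :
    mu6 a4 a6 a7 b =
      X 13 ^ 3 + 4 * X 11 ^ 4 * a4 - 3 * X 13 ^ 2 * a6 + 5 * X 14 * a7 - 10 * b := by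
  simp only [mu6, phiE8, lam4, lam6, lam7]
  ring

theorem mu7_eq :
    mu7 a4 a6 a7 b =
      X 14 ^ 2 - 6 * X 11 ^ 4 * a4 + 5 * X 13 ^ 2 * a6 - 7 * X 14 * a7 + 15 * b := by
  simp only [mu7, phiE8, lam4, lam6, lam7]
  ring

/-- The weights (2, -1, 1) pair to 1 with the φ-coefficients (-12, -10, 15) of the μ's and to 0
with their coefficients of y₆⁴λ₄, y₁₀²λ₆ and y₁₅λ₇. -/
theorem phiE8_eq_mu_combination :
    phiE8 b = 2 * mu4 a4 a6 a7 b - mu6 a4 a6 a7 b + mu7 a4 a6 a7 b := by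
  simp only [mu4, mu6, mu7]
  ring

theorem phiE8_mem_span_mu :
    phiE8 b ∈ Ideal.span {mu4 a4 a6 a7 b, mu6 a4 a6 a7 b, mu7 a4 a6 a7 b} := by
  rw [phiE8_eq_mu_combination a4 a6 a7 b]
  have hmem {x : E8P} (hx : x ∈ ({mu4 a4 a6 a7 b, mu6 a4 a6 a7 b, mu7 a4 a6 a7 b} : Set E8P)) :
      x ∈ Ideal.span {mu4 a4 a6 a7 b, mu6 a4 a6 a7 b, mu7 a4 a6 a7 b} :=
    Ideal.subset_span hx
  exact add_mem (sub_mem (Ideal.mul_mem_left _ _ (hmem (by simp))) (hmem (by simp))) (hmem (by simp))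

theorem mem_sup_span_phiE8_of_mem_mu {I : Ideal E8P}
    (h4 : lam4 a4 ∈ I) (h6 : lam6 a6 ∈ I) (h7 : lam7 a7 ∈ I) {x : E8P}
    (hx : x ∈ ({mu4 a4 a6 a7 b, mu6 a4 a6 a7 b, mu7 a4 a6 a7 b} : Set E8P)) :
    x ∈ I ⊔ Ideal.span {phiE8 b} := by
  set J := I ⊔ Ideal.span {phiE8 b}
  have hphi : phiE8 b ∈ J := Ideal.mem_sup_right (Ideal.mem_span_singleton_self _)
  have hI : I ≤ J := le_sup_left
  have hcomb (c p q r : E8P) : c * phiE8 b + p * lam4 a4 + q * lam6 a6 + r * lam7 a7 ∈ J :=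
    add_mem (add_mem (add_mem (J.mul_mem_left c hphi) (J.mul_mem_left p (hI h4)))
      (J.mul_mem_left q (hI h6))) (J.mul_mem_left r (hI h7))
  rcases hx with rfl | rfl | rfl
  · convert hcomb (-12) (5 * X 11 ^ 4) (-4 * X 13 ^ 2) (6 * X 14) using 1
    simp only [mu4]
    ring
  · convert hcomb (-10) (4 * X 11 ^ 4) (-3 * X 13 ^ 2) (5 * X 14) using 1
    simp only [mu6]
    ring
  · convert hcomb 15 (-6 * X 11 ^ 4) (5 * X 13 ^ 2) (-7 * X 14) using 1
    simp only [mu7]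
    ring

end

theorem E8_missing_relations_general (a4 a6 a7 b : E8P) :
    (mu4 a4 a6 a7 b =
        X 11 ^ 5 + 5 * X 11 ^ 4 * a4 - 4 * X 13 ^ 2 * a6 + 6 * X 14 * a7 - 12 * b ∧
      mu6 a4 a6 a7 b =
        X 13 ^ 3 + 4 * X 11 ^ 4 * a4 - 3 * X 13 ^ 2 * a6 + 5 * X 14 * a7 - 10 * b ∧
      mu7 a4 a6 a7 b =
        X 14 ^ 2 - 6 * X 11 ^ 4 * a4 + 5 * X 13 ^ 2 * a6 - 7 * X 14 * a7 + 15 * b) ∧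
    phiE8 b = 2 * mu4 a4 a6 a7 b - mu6 a4 a6 a7 b + mu7 a4 a6 a7 b ∧
    ∀ I : Ideal E8P, lam4 a4 ∈ I → lam6 a6 ∈ I → lam7 a7 ∈ I →
      I ⊔ Ideal.span {phiE8 b} =
        I ⊔ Ideal.span {mu4 a4 a6 a7 b, mu6 a4 a6 a7 b, mu7 a4 a6 a7 b} :=
  ⟨⟨mu4_eq a4 a6 a7 b, mu6_eq a4 a6 a7 b, mu7_eq a4 a6 a7 b⟩, phiE8_eq_mu_combination a4 a6 a7 b,
    fun _ h4 h6 h7 => Ideal.sup_span_eq_sup_span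
      (fun _ hx => hx ▸ Ideal.mem_sup_right (phiE8_mem_span_mu a4 a6 a7 b))
      (fun _ => mem_sup_span_phiE8_of_mem_mu a4 a6 a7 b h4 h6 h7)⟩

/-- The construction (5.3)–(5.5) for G = E₈: explicit forms of μ₄, μ₆, μ₇,
    recovery of φ from them, and the resulting equality of ideals. -/
theorem E8_missing_relations (a4 a6 a7 b : E8P)
    (ha4 : a4 ∈ E8omegaIdeal) (ha6 : a6 ∈ E8omegaIdeal)
    (ha7 : a7 ∈ E8omegaIdeal) (hb : b ∈ E8omegaIdeal) :
    (mu4 a4 a6 a7 b =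
        X 11 ^ 5 + 5 * X 11 ^ 4 * a4 - 4 * X 13 ^ 2 * a6 + 6 * X 14 * a7 - 12 * b ∧
      mu6 a4 a6 a7 b =
        X 13 ^ 3 + 4 * X 11 ^ 4 * a4 - 3 * X 13 ^ 2 * a6 + 5 * X 14 * a7 - 10 * b ∧
      mu7 a4 a6 a7 b =
        X 14 ^ 2 - 6 * X 11 ^ 4 * a4 + 5 * X 13 ^ 2 * a6 - 7 * X 14 * a7 + 15 * b) ∧
    phiE8 b = 2 * mu4 a4 a6 a7 b - mu6 a4 a6 a7 b + mu7 a4 a6 a7 b ∧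
    ∀ I : Ideal E8P, lam4 a4 ∈ I → lam6 a6 ∈ I → lam7 a7 ∈ I →
      I ⊔ Ideal.span {phiE8 b} =
        I ⊔ Ideal.span {mu4 a4 a6 a7 b, mu6 a4 a6 a7 b, mu7 a4 a6 a7 b} :=
  E8_missing_relations_general a4 a6 a7 b
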